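/- arXiv:1312.4492 — 3 statements merged into one kernel-verified Lean document; each statement's English description precedes it below -/
import Mathlib

section
/- Let M > 0 and ε₀ > 0. For each ε ∈ (0, ε₀] let S(·,ε) : ℝ → ℝ be a real trigonometric polynomial S(t,ε) = Σ_{j=1}^N (α_j(ε) cos(μ_j t) + β_j(ε) sin(μ_j t)) whose frequencies satisfy μ_j ≥ 0 and μ_j ≠ 1 for all j, and with |S(t,ε)| ≤ M for all t ≥ 0 and all ε. Let g : [0,∞) × ℝ × (0,ε₀] → ℝ be continuous with |g(t,0,ε)| ≤ M for all t, ε, and such that for every R > 0 there is k_R > 0 with |g(t,u,ε) − g(t,v,ε)| ≤ k_R |u − v| whenever |u|, |v| ≤ R, uniformly in t and ε. If, for each ε, w_ε ∈ C²([0,∞)) solves w'' + w = S(t,ε) + ε g(t,w,ε) with w(0) = 0 and w'(0) = 0, then there exist γ > 0, C > 0 and ε₁ ∈ (0,ε₀] such that for all ε ∈ (0,ε₁] and all t ∈ [0, γ/ε], |w_ε(t)| + |w_ε'(t)| + |w_ε''(t)| ≤ C. -/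
/-!
Put `z = (w' - i w) e^{it}`. Then `w'' + w = F` becomes `z' = F e^{it}`, so with zero initial
data `z t = ∫₀ᵗ F(s) e^{is} ds`, and `|w|, |w'| ≤ |z|`. For `F = S + ε g` the resonant part of
this integral is absent: each `cos (μ s) e^{is}`, `sin (μ s) e^{is}` with `μ ≠ ±1` is a sum of
non-constant exponentials and has a bounded primitive, and since the trigonometric polynomials
with the given frequencies form a finite-dimensional space, `S(·, ε)` can be rewritten with
coefficients bounded by `sup |S| ≤ M`. So `∫₀ᵗ S e^{is}` is bounded uniformly in `t` and `ε`,
while the perturbation contributes at most `ε G t ≤ γ G`, where `G` bounds `g` on a ball of radius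
`R`. Choosing `γ G ≤ 1/2`, a continuity argument keeps `w` in that ball on `[0, γ/ε]`; finally
`w'' = S + ε g - w`.
-/

/-- Right-sided derivative on `[0,∞)`. -/
noncomputable def dIci (f : ℝ → ℝ) : ℝ → ℝ := derivWithin f (Set.Ici 0)

open Complex Set MeasureTheory

theorem LinearMap.exists_preimage_norm_le_of_finiteDimensional {𝕜 E F : Type*}
    [NontriviallyNormedField 𝕜] [CompleteSpace 𝕜]
    [NormedAddCommGroup E] [NormedSpace 𝕜 E] [FiniteDimensional 𝕜 E]
    [NormedAddCommGroup F] [NormedSpace 𝕜 F] (T : E →ₗ[𝕜] F) :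
    ∃ C > 0, ∀ x, ∃ y, T y = T x ∧ ‖y‖ ≤ C * ‖T x‖ := by
  have : CompleteSpace (LinearMap.range T) := FiniteDimensional.complete 𝕜 _
  have : CompleteSpace E := FiniteDimensional.complete 𝕜 E
  obtain ⟨C, hC, hpre⟩ := (LinearMap.toContinuousLinearMap T.rangeRestrict).exists_preimage_norm_le
    T.surjective_rangeRestrict
  refine ⟨C, hC, fun x => ?_⟩
  obtain ⟨y, hy, hle⟩ := hpre (T.rangeRestrict x)
  exact ⟨y, congrArg Subtype.val hy, hle⟩

theorem norm_integral_exp_mul_I_le {a : ℝ} (ha : a ≠ 0) (t : ℝ) :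
    ‖∫ s in (0:ℝ)..t, cexp (a * s * I)‖ ≤ 2 / |a| := by
  have haI : (a : ℂ) * I ≠ 0 := mul_ne_zero (ofReal_ne_zero.2 ha) I_ne_zero
  simp_rw [mul_right_comm (a : ℂ) _ I]
  rw [integral_exp_mul_complex haI, norm_div, norm_mul, norm_I, mul_one, norm_real,
    Real.norm_eq_abs]
  gcongr
  refine (norm_sub_le _ _).trans ?_
  simp [norm_exp]
  norm_num

theorem norm_integral_exp_add_exp_le {a b : ℝ} (ha : a ≠ 0) (hb : b ≠ 0) (t : ℝ) (p q : ℂ) :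
    ‖∫ s in (0:ℝ)..t, (p * cexp (a * s * I) + q * cexp (b * s * I))‖
      ≤ ‖p‖ * (2 / |a|) + ‖q‖ * (2 / |b|) := by
  rw [intervalIntegral.integral_add (Continuous.intervalIntegrable (by fun_prop) _ _)
    (Continuous.intervalIntegrable (by fun_prop) _ _), intervalIntegral.integral_const_mul,
    intervalIntegral.integral_const_mul]
  refine (norm_add_le _ _).trans ?_
  rw [norm_mul, norm_mul]
  gcongr
  exacts [norm_integral_exp_mul_I_le ha t, norm_integral_exp_mul_I_le hb t]

theorem norm_integral_cos_mul_exp_le {μ : ℝ} (h1 : μ ≠ 1) (h2 : μ ≠ -1) (t : ℝ) :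
    ‖∫ s in (0:ℝ)..t, (Real.cos (μ * s) : ℂ) * cexp (s * I)‖ ≤ 1 / |μ + 1| + 1 / |1 - μ| := by
  have key : ∀ s : ℝ, (Real.cos (μ * s) : ℂ) * cexp (s * I)
      = 2⁻¹ * cexp ((μ + 1 : ℝ) * s * I) + 2⁻¹ * cexp ((1 - μ : ℝ) * s * I) := by
    intro s
    rw [ofReal_cos, cos]
    push_cast
    simp only [add_mul, sub_mul, one_mul, neg_mul, exp_add, exp_sub, exp_neg]
    field_simp
  simp_rw [key]
  refine (norm_integral_exp_add_exp_le (by grind) (by grind) t _ _).trans_eq ?_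
  norm_num
  ring

theorem norm_integral_sin_mul_exp_le {μ : ℝ} (h1 : μ ≠ 1) (h2 : μ ≠ -1) (t : ℝ) :
    ‖∫ s in (0:ℝ)..t, (Real.sin (μ * s) : ℂ) * cexp (s * I)‖ ≤ 1 / |μ + 1| + 1 / |1 - μ| := by
  have key : ∀ s : ℝ, (Real.sin (μ * s) : ℂ) * cexp (s * I)
      = (-I / 2) * cexp ((μ + 1 : ℝ) * s * I) + (I / 2) * cexp ((1 - μ : ℝ) * s * I) := by
    intro s
    rw [ofReal_sin, sin]
    push_cast
    simp only [add_mul, sub_mul, one_mul, neg_mul, exp_add, exp_sub, exp_neg]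
    field_simp
    ring
  simp_rw [key]
  refine (norm_integral_exp_add_exp_le (by grind) (by grind) t _ _).trans_eq ?_
  norm_num
  ring

theorem exists_norm_integral_sum_mul_le {ι : Type*} [Fintype ι] {φ : ι → ℝ → ℝ}
    (hφ : ∀ i, Continuous (φ i)) (hφb : ∀ i, ∃ B, ∀ t ≥ 0, |φ i t| ≤ B)
    {ρ : ℝ → ℂ} (hρ : Continuous ρ)
    (hK : ∀ i, ∃ K, ∀ t ≥ 0, ‖∫ s in (0:ℝ)..t, (φ i s : ℂ) * ρ s‖ ≤ K) :
    ∃ C ≥ 0, ∀ (c : ι → ℝ) (B : ℝ), (∀ t ≥ 0, |∑ i, c i * φ i t| ≤ B) →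
      ∀ t ≥ 0, ‖∫ s in (0:ℝ)..t, ((∑ i, c i * φ i s : ℝ) : ℂ) * ρ s‖ ≤ C * B := by
  choose B hB using hφb
  choose K hK using hK
  have hK0 : ∀ i, 0 ≤ K i := fun i => by simpa using hK i 0 le_rfl
  let Φ : ι → BoundedContinuousFunction (Ici (0:ℝ)) ℝ := fun i =>
    .ofNormedAddCommGroup (fun x => φ i x) (by fun_prop) (B i) fun x => hB i x x.2
  obtain ⟨Cb, hCb, hpre⟩ :=
    (Fintype.linearCombination ℝ Φ).exists_preimage_norm_le_of_finiteDimensional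
  refine ⟨Cb * ∑ i, K i, mul_nonneg hCb.le (Finset.sum_nonneg fun i _ => hK0 i),
    fun c B hcB t ht => ?_⟩
  -- `c` itself may be unbounded (the `φ i` need not be independent), but `c'` is not.
  obtain ⟨c', hc', hc'le⟩ := hpre c
  have hnorm : ‖Fintype.linearCombination ℝ Φ c‖ ≤ B := by
    refine BoundedContinuousFunction.norm_le_of_nonempty.2 fun x => ?_
    simpa [Fintype.linearCombination_apply, BoundedContinuousFunction.sum_apply, Φ]
      using hcB x x.2
  have hsum : ∀ s ≥ 0, ∑ i, c i * φ i s = ∑ i, c' i * φ i s := by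
    intro s hs
    simpa [Fintype.linearCombination_apply, BoundedContinuousFunction.sum_apply, Φ]
      using congrArg (fun f => f ⟨s, hs⟩) hc'.symm
  have hint : ∫ s in (0:ℝ)..t, ((∑ i, c i * φ i s : ℝ) : ℂ) * ρ s
      = ∑ i, (c' i : ℂ) * ∫ s in (0:ℝ)..t, (φ i s : ℂ) * ρ s := by
    rw [intervalIntegral.integral_congr (g := fun s => ∑ i, (c' i : ℂ) * ((φ i s : ℂ) * ρ s))]
    · rw [intervalIntegral.integral_finsetSum fun i _ =>
        (Continuous.intervalIntegrable (by fun_prop) _ _)]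
      simp only [intervalIntegral.integral_const_mul]
    · intro s hs
      rw [uIcc_of_le ht] at hs
      simp only [hsum s hs.1, ofReal_sum, ofReal_mul, Finset.sum_mul, mul_assoc]
  rw [hint]
  calc ‖∑ i, (c' i : ℂ) * ∫ s in (0:ℝ)..t, (φ i s : ℂ) * ρ s‖
      ≤ ∑ i, ‖c'‖ * K i := by
        refine (norm_sum_le _ _).trans (Finset.sum_le_sum fun i _ => ?_)
        rw [norm_mul, norm_real]
        exact mul_le_mul (norm_le_pi_norm c' i) (hK i t ht) (norm_nonneg _) (norm_nonneg _)
    _ ≤ ∑ i, Cb * B * K i := by gcongr with i; exacts [hK0 i, hc'le.trans (by gcongr)]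
    _ = Cb * (∑ i, K i) * B := by rw [← Finset.mul_sum]; ring

noncomputable def trigPoly {N : ℕ} (μ a b : Fin N → ℝ) (t : ℝ) : ℝ :=
  ∑ j, (a j * Real.cos (μ j * t) + b j * Real.sin (μ j * t))

theorem continuous_trigPoly {N : ℕ} (μ a b : Fin N → ℝ) : Continuous (trigPoly μ a b) := by
  unfold trigPoly; fun_prop

theorem exists_norm_integral_trigPoly_mul_exp_le {N : ℕ} {μ : Fin N → ℝ}
    (h1 : ∀ j, μ j ≠ 1) (h2 : ∀ j, μ j ≠ -1) :
    ∃ K ≥ 0, ∀ (a b : Fin N → ℝ) (B : ℝ), (∀ t ≥ 0, |trigPoly μ a b t| ≤ B) →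
      ∀ t ≥ 0, ‖∫ s in (0:ℝ)..t, (trigPoly μ a b s : ℂ) * cexp (s * I)‖ ≤ K * B := by
  let φ : Fin N ⊕ Fin N → ℝ → ℝ :=
    Sum.elim (fun j s => Real.cos (μ j * s)) (fun j s => Real.sin (μ j * s))
  have hφ : ∀ a b t, trigPoly μ a b t = ∑ i, Sum.elim a b i * φ i t := fun a b t => by
    simp [trigPoly, φ, Fintype.sum_sum_type, Finset.sum_add_distrib]
  obtain ⟨K, hK0, hK⟩ := exists_norm_integral_sum_mul_le (φ := φ) (ρ := fun s => cexp (s * I))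
    (by rintro (j | j) <;> simp only [φ, Sum.elim_inl, Sum.elim_inr] <;> fun_prop)
    (by
      rintro (j | j) <;>
        exact ⟨1, fun t _ => by simp [φ, Real.abs_cos_le_one, Real.abs_sin_le_one]⟩)
    (by fun_prop)
    (by
      rintro (j | j) <;> refine ⟨1 / |μ j + 1| + 1 / |1 - μ j|, fun t _ => ?_⟩
      exacts [norm_integral_cos_mul_exp_le (h1 j) (h2 j) t,
        norm_integral_sin_mul_exp_le (h1 j) (h2 j) t])
  refine ⟨K, hK0, fun a b B hB t ht => ?_⟩
  simp only [hφ] at hB ⊢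
  exact hK _ B hB t ht

theorem phase_eq_integral {v : ℝ → ℝ} (hv : ContDiffOn ℝ 2 v (Ici 0)) (h0 : v 0 = 0)
    (h0' : dIci v 0 = 0) {t : ℝ} (ht : 0 ≤ t) :
    ((dIci v t : ℂ) - v t * I) * cexp (t * I)
      = ∫ s in (0:ℝ)..t, ((dIci (dIci v) s + v s : ℝ) : ℂ) * cexp (s * I) := by
  have hu : UniqueDiffOn ℝ (Ici (0:ℝ)) := uniqueDiffOn_Ici 0
  have hv' : ContDiffOn ℝ 1 (dIci v) (Ici 0) := hv.derivWithin hu (by norm_num)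
  have hderiv : ∀ s ∈ Ici (0:ℝ),
      HasDerivWithinAt (fun s => ((dIci v s : ℂ) - v s * I) * cexp (s * I))
      (((dIci (dIci v) s + v s : ℝ) : ℂ) * cexp (s * I)) (Ici 0) s := by
    intro s hs
    have h1 := ((hv'.differentiableOn one_ne_zero s hs).hasDerivWithinAt).ofReal_comp
    have h2 := ((hv.differentiableOn (by norm_num) s hs).hasDerivWithinAt).ofReal_comp
    have h3 := (((hasDerivAt_id s).ofReal_comp).mul_const I).cexp
    refine ((h1.sub (h2.mul_const I)).mul h3.hasDerivWithinAt).congr_deriv ?_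
    simp only [dIci, id, Pi.sub_apply, ofReal_one, one_mul, ofReal_add]
    linear_combination -(v s : ℂ) * cexp (s * I) * I_sq
  have hcont : ContinuousOn (fun s => ((dIci (dIci v) s + v s : ℝ) : ℂ) * cexp (s * I)) (Ici 0) :=
    (continuous_ofReal.comp_continuousOn
      ((hv'.continuousOn_derivWithin hu le_rfl).add hv.continuousOn)).mul (by fun_prop)
  rw [intervalIntegral.integral_eq_sub_of_hasDeriv_right_of_le ht
    (fun s hs => (hderiv s hs.1).continuousWithinAt.mono Icc_subset_Ici_self)
    (fun s hs => (hderiv s hs.1.le).mono (Ioi_subset_Ici_self.trans (Ici_subset_Ici.2 hs.1.le)))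
    ((hcont.mono Icc_subset_Ici_self).intervalIntegrable_of_Icc ht)]
  simp [h0, h0']

theorem forall_abs_le_of_bootstrap {f : ℝ → ℝ} {T R : ℝ} (hf : ContinuousOn f (Icc 0 T))
    (h0 : |f 0| < R) (hstep : ∀ t ∈ Icc 0 T, (∀ s ∈ Icc 0 t, |f s| ≤ R) → |f t| < R) :
    ∀ t ∈ Icc 0 T, |f t| ≤ R := by
  by_contra! ⟨t₁, ht₁, hR⟩
  set A := Icc 0 t₁ ∩ (fun s => |f s|) ⁻¹' Ici R
  have hA : IsClosed A := (hf.abs.mono (Icc_subset_Icc_right ht₁.2)).preimage_isClosed_of_isClosed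
    isClosed_Icc isClosed_Ici
  have hτ : sInf A ∈ A := hA.csInf_mem ⟨t₁, ⟨ht₁.1, le_rfl⟩, hR.le⟩ ⟨0, fun s hs => hs.1.1⟩
  set τ := sInf A
  have hτT : τ ∈ Icc 0 T := ⟨hτ.1.1, hτ.1.2.trans ht₁.2⟩
  have hτ0 : τ ≠ 0 := fun h => (h ▸ hτ.2 : R ≤ |f 0|).not_gt h0
  have hB : IsClosed (Icc 0 τ ∩ (fun s => |f s|) ⁻¹' Iic R) :=
    (hf.abs.mono (Icc_subset_Icc_right hτT.2)).preimage_isClosed_of_isClosed isClosed_Icc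
      isClosed_Iic
  have hbelow : Ico 0 τ ⊆ Icc 0 τ ∩ (fun s => |f s|) ⁻¹' Iic R := fun s hs =>
    ⟨Ico_subset_Icc_self hs, show |f s| ≤ R from not_lt.1 fun hs' =>
      hs.2.not_ge (csInf_le ⟨0, fun x hx => hx.1.1⟩ ⟨⟨hs.1, hs.2.le.trans hτ.1.2⟩, hs'.le⟩)⟩
  have hle : ∀ s ∈ Icc 0 τ, |f s| ≤ R := fun s hs =>
    (hB.closure_subset_iff.2 hbelow (by rwa [closure_Ico hτ0.symm])).2
  exact (hstep τ hτT hle).not_ge hτ.2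

theorem abs_le_norm_phase (x y t : ℝ) :
    |x| ≤ ‖((x : ℂ) - y * I) * cexp (t * I)‖ ∧ |y| ≤ ‖((x : ℂ) - y * I) * cexp (t * I)‖ := by
  rw [norm_mul, norm_exp_ofReal_mul_I, mul_one]
  constructor
  · simpa using abs_re_le_norm ((x : ℂ) - y * I)
  · simpa using abs_im_le_norm ((x : ℂ) - y * I)

theorem norm_phase_le_of_near_forcing {v f : ℝ → ℝ} {C₀ δ t : ℝ}
    (hv : ContDiffOn ℝ 2 v (Ici 0)) (h0 : v 0 = 0) (h0' : dIci v 0 = 0) (hf : Continuous f)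
    (ht : 0 ≤ t) (hfint : ‖∫ s in (0:ℝ)..t, (f s : ℂ) * cexp (s * I)‖ ≤ C₀)
    (hpert : ∀ s ∈ Icc 0 t, |dIci (dIci v) s + v s - f s| ≤ δ) :
    ‖((dIci v t : ℂ) - v t * I) * cexp (t * I)‖ ≤ C₀ + δ * t := by
  have hF : ContinuousOn (fun s => dIci (dIci v) s + v s) (Ici 0) :=
    (((hv.derivWithin (uniqueDiffOn_Ici 0) (m := 1) (by norm_num)).continuousOn_derivWithin
      (uniqueDiffOn_Ici 0) le_rfl).add hv.continuousOn)
  have hFint : IntervalIntegrable (fun s => ((dIci (dIci v) s + v s : ℝ) : ℂ) * cexp (s * I))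
      volume 0 t :=
    ((continuous_ofReal.comp_continuousOn (hF.mono Icc_subset_Ici_self)).mul
      (by fun_prop)).intervalIntegrable_of_Icc ht
  have hfint' : IntervalIntegrable (fun s => (f s : ℂ) * cexp (s * I)) volume 0 t :=
    Continuous.intervalIntegrable (by fun_prop) _ _
  have hpert' : ∀ s ∈ uIoc 0 t, ‖((dIci (dIci v) s + v s : ℝ) : ℂ) * cexp (s * I)
      - (f s : ℂ) * cexp (s * I)‖ ≤ δ := fun s hs => by
    rw [uIoc_of_le ht] at hs
    rw [← sub_mul, ← ofReal_sub, norm_mul, norm_exp_ofReal_mul_I, mul_one, norm_real]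
    exact hpert s (Ioc_subset_Icc_self hs)
  rw [phase_eq_integral hv h0 h0' ht, ← sub_add_cancel (∫ s in (0:ℝ)..t, _)
    (∫ s in (0:ℝ)..t, (f s : ℂ) * cexp (s * I)), ← intervalIntegral.integral_sub hFint hfint']
  have := norm_add_le_of_le (intervalIntegral.norm_integral_le_of_norm_le_const hpert') hfint
  rw [sub_zero, abs_of_nonneg ht] at this
  linarith

theorem abs_le_and_abs_dIci_le_of_near_forcing {v f : ℝ → ℝ} {C₀ δ T : ℝ}
    (hv : ContDiffOn ℝ 2 v (Ici 0)) (h0 : v 0 = 0) (h0' : dIci v 0 = 0) (hf : Continuous f)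
    (hC₀ : 0 ≤ C₀) (hδ : 0 ≤ δ) (hδT : δ * T ≤ 1 / 2)
    (hfint : ∀ t ∈ Icc 0 T, ‖∫ s in (0:ℝ)..t, (f s : ℂ) * cexp (s * I)‖ ≤ C₀)
    (hpert : ∀ t ∈ Icc 0 T, |v t| ≤ C₀ + 1 → |dIci (dIci v) t + v t - f t| ≤ δ) :
    ∀ t ∈ Icc 0 T, |v t| ≤ C₀ + 1 ∧ |dIci v t| ≤ C₀ + 1 := by
  have hphase : ∀ t ∈ Icc 0 T, (∀ s ∈ Icc 0 t, |v s| ≤ C₀ + 1) →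
      ‖((dIci v t : ℂ) - v t * I) * cexp (t * I)‖ ≤ C₀ + 1 / 2 := fun t ht hvt => by
    have := norm_phase_le_of_near_forcing hv h0 h0' hf ht.1 (hfint t ht)
      fun s hs => hpert s ⟨hs.1, hs.2.trans ht.2⟩ (hvt s hs)
    linarith [mul_le_mul_of_nonneg_left ht.2 hδ]
  have hvR : ∀ t ∈ Icc 0 T, |v t| ≤ C₀ + 1 :=
    forall_abs_le_of_bootstrap (hv.continuousOn.mono Icc_subset_Ici_self)
      (by rw [h0, abs_zero]; linarith) fun t ht hvt =>
        (abs_le_norm_phase _ _ t).2.trans_lt (by linarith [hphase t ht hvt])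
  intro t ht
  have hz := hphase t ht fun s hs => hvR s ⟨hs.1, hs.2.trans ht.2⟩
  exact ⟨hvR t ht, by linarith [(abs_le_norm_phase (dIci v t) (v t) t).1]⟩

theorem sum_abs_dIci_le_of_near_forcing {v f : ℝ → ℝ} {C₀ δ T M : ℝ}
    (hv : ContDiffOn ℝ 2 v (Ici 0)) (h0 : v 0 = 0) (h0' : dIci v 0 = 0) (hf : Continuous f)
    (hC₀ : 0 ≤ C₀) (hδ : 0 ≤ δ) (hδT : δ * T ≤ 1 / 2) (hfM : ∀ t ∈ Icc 0 T, |f t| ≤ M)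
    (hfint : ∀ t ∈ Icc 0 T, ‖∫ s in (0:ℝ)..t, (f s : ℂ) * cexp (s * I)‖ ≤ C₀)
    (hpert : ∀ t ∈ Icc 0 T, |v t| ≤ C₀ + 1 → |dIci (dIci v) t + v t - f t| ≤ δ) :
    ∀ t ∈ Icc 0 T, |v t| + |dIci v t| + |dIci (dIci v) t| ≤ 3 * (C₀ + 1) + M + δ := by
  intro t ht
  obtain ⟨hv0, hv1⟩ :=
    abs_le_and_abs_dIci_le_of_near_forcing hv h0 h0' hf hC₀ hδ hδT hfint hpert t ht
  have hv2 := abs_add_le (dIci (dIci v) t + v t - f t) (f t - v t)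
  rw [show dIci (dIci v) t + v t - f t + (f t - v t) = dIci (dIci v) t by ring] at hv2
  linarith [hpert t ht hv0, abs_sub (f t) (v t), hfM t ht]

theorem stmt_0_general (M ε₀ : ℝ) (hε₀ : 0 < ε₀)
    (N : ℕ) (α β : Fin N → ℝ → ℝ) (μ : Fin N → ℝ)
    (hμ0 : ∀ j, 0 ≤ μ j) (hμ1 : ∀ j, μ j ≠ 1)
    (S : ℝ → ℝ → ℝ)
    (hSdef : ∀ t ε, S t ε = ∑ j, (α j ε * Real.cos (μ j * t) + β j ε * Real.sin (μ j * t)))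
    (hSbd : ∀ t ≥ (0:ℝ), ∀ ε ∈ Set.Ioc (0:ℝ) ε₀, |S t ε| ≤ M)
    (g : ℝ → ℝ → ℝ → ℝ)
    (hg0 : ∀ t ≥ (0:ℝ), ∀ ε ∈ Set.Ioc (0:ℝ) ε₀, |g t 0 ε| ≤ M)
    (hglip : ∀ R > (0:ℝ), ∃ kR > (0:ℝ), ∀ t ≥ (0:ℝ), ∀ ε ∈ Set.Ioc (0:ℝ) ε₀,
        ∀ u v : ℝ, |u| ≤ R → |v| ≤ R → |g t u ε - g t v ε| ≤ kR * |u - v|)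
    (w : ℝ → ℝ → ℝ)
    (hwreg : ∀ ε ∈ Set.Ioc (0:ℝ) ε₀, ContDiffOn ℝ 2 (w ε) (Set.Ici 0))
    (hode : ∀ ε ∈ Set.Ioc (0:ℝ) ε₀, ∀ t ≥ (0:ℝ),
        dIci (dIci (w ε)) t + w ε t = S t ε + ε * g t (w ε t) ε)
    (hw0 : ∀ ε ∈ Set.Ioc (0:ℝ) ε₀, w ε 0 = 0)
    (hw0' : ∀ ε ∈ Set.Ioc (0:ℝ) ε₀, dIci (w ε) 0 = 0) :
    ∃ γ > (0:ℝ), ∃ C > (0:ℝ), ∃ ε₁ ∈ Set.Ioc (0:ℝ) ε₀, ∀ ε ∈ Set.Ioc (0:ℝ) ε₁,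
      ∀ t ∈ Set.Icc (0:ℝ) (γ / ε),
        |w ε t| + |dIci (w ε) t| + |dIci (dIci (w ε)) t| ≤ C := by
  have hM : 0 ≤ M := (abs_nonneg _).trans (hg0 0 le_rfl ε₀ ⟨hε₀, le_rfl⟩)
  obtain ⟨K, hK0, hK⟩ :=
    exists_norm_integral_trigPoly_mul_exp_le hμ1 fun j h => by linarith [hμ0 j]
  set R := K * M + 1
  obtain ⟨k, hk0, hk⟩ := hglip R (by positivity)
  set G := M + k * R
  have hG : 0 < G := by positivity
  have hg : ∀ t ≥ (0:ℝ), ∀ ε ∈ Ioc 0 ε₀, ∀ u, |u| ≤ R → |g t u ε| ≤ G := by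
    intro t ht ε hε u hu
    have hku : k * |u - 0| ≤ k * R := by rw [sub_zero]; gcongr
    linarith [abs_sub_abs_le_abs_sub (g t u ε) (g t 0 ε), hg0 t ht ε hε,
      hk t ht ε hε u 0 hu (by rw [abs_zero]; positivity)]
  refine ⟨1 / (2 * G), by positivity, 3 * R + M + ε₀ * G, by positivity, ε₀, ⟨hε₀, le_rfl⟩,
    fun ε hε t ht => ?_⟩
  have hS : ∀ s, S s ε = trigPoly μ (α · ε) (β · ε) s := fun s => hSdef s ε
  refine (sum_abs_dIci_le_of_near_forcing (f := fun s => S s ε) (C₀ := K * M) (δ := ε * G)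
    (hwreg ε hε) (hw0 ε hε) (hw0' ε hε) (by simpa only [hS] using continuous_trigPoly _ _ _)
    (by positivity) (mul_nonneg hε.1.le hG.le) (le_of_eq (by field_simp [hε.1.ne', hG.ne']))
    (fun s hs => hSbd s hs.1 ε hε)
    (fun s hs => by simpa only [hS] using hK _ _ M (by simpa only [hS] using hSbd · · ε hε) s hs.1)
    (fun s hs hws => by
      rw [show dIci (dIci (w ε)) s + w ε s - S s ε = ε * g s (w ε s) ε by
        linarith [hode ε hε s hs.1], abs_mul, abs_of_pos hε.1]
      exact mul_le_mul_of_nonneg_left (hg s hs.1 ε hε _ hws) hε.1.le) t ht).trans ?_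
  gcongr
  exact hε.2

/-- Key technical remainder lemma: for `w'' + w = S(t,ε) + ε g(t,w,ε)` with zero data,
non-resonant trigonometric forcing `S` and locally Lipschitz `g`, the solution is
bounded in `C²` on time intervals `[0, γ/ε]`. -/
theorem stmt_0 (M ε₀ : ℝ) (hM : 0 < M) (hε₀ : 0 < ε₀)
    (N : ℕ) (α β : Fin N → ℝ → ℝ) (μ : Fin N → ℝ)
    (hμ0 : ∀ j, 0 ≤ μ j) (hμ1 : ∀ j, μ j ≠ 1)
    (S : ℝ → ℝ → ℝ)
    (hSdef : ∀ t ε, S t ε = ∑ j, (α j ε * Real.cos (μ j * t) + β j ε * Real.sin (μ j * t)))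
    (hSbd : ∀ t ≥ (0:ℝ), ∀ ε ∈ Set.Ioc (0:ℝ) ε₀, |S t ε| ≤ M)
    (g : ℝ → ℝ → ℝ → ℝ)
    (hgcont : ContinuousOn (fun q : ℝ × ℝ × ℝ => g q.1 q.2.1 q.2.2)
        ((Set.Ici (0:ℝ)) ×ˢ ((Set.univ : Set ℝ) ×ˢ (Set.Ioc (0:ℝ) ε₀))))
    (hg0 : ∀ t ≥ (0:ℝ), ∀ ε ∈ Set.Ioc (0:ℝ) ε₀, |g t 0 ε| ≤ M)
    (hglip : ∀ R > (0:ℝ), ∃ kR > (0:ℝ), ∀ t ≥ (0:ℝ), ∀ ε ∈ Set.Ioc (0:ℝ) ε₀,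
        ∀ u v : ℝ, |u| ≤ R → |v| ≤ R → |g t u ε - g t v ε| ≤ kR * |u - v|)
    (w : ℝ → ℝ → ℝ)
    (hwreg : ∀ ε ∈ Set.Ioc (0:ℝ) ε₀, ContDiffOn ℝ 2 (w ε) (Set.Ici 0))
    (hode : ∀ ε ∈ Set.Ioc (0:ℝ) ε₀, ∀ t ≥ (0:ℝ),
        dIci (dIci (w ε)) t + w ε t = S t ε + ε * g t (w ε t) ε)
    (hw0 : ∀ ε ∈ Set.Ioc (0:ℝ) ε₀, w ε 0 = 0)
    (hw0' : ∀ ε ∈ Set.Ioc (0:ℝ) ε₀, dIci (w ε) 0 = 0) :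
    ∃ γ > (0:ℝ), ∃ C > (0:ℝ), ∃ ε₁ ∈ Set.Ioc (0:ℝ) ε₀, ∀ ε ∈ Set.Ioc (0:ℝ) ε₁,
      ∀ t ∈ Set.Icc (0:ℝ) (γ / ε),
        |w ε t| + |dIci (w ε) t| + |dIci (dIci (w ε)) t| ≤ C :=
  stmt_0_general M ε₀ hε₀ N α β μ hμ0 hμ1 S hSdef hSbd g hg0 hglip w hwreg hode hw0 hw0'
end

section
/- Let N ≥ 1, ω > 0 and ω₁,…,ω_N > 0 with ω₁ = ω, and suppose ω_k/ω ∉ ℤ for every k ≥ 2. Let M > 0, ε₀ > 0. For k = 1,…,N let S_k(t) = Σ_{m=0}^{M₀} (α_{k,m} cos(m t) + β_{k,m} sin(m t)) be trigonometric polynomials with nonnegative integer frequencies satisfying |S_k(t)| ≤ M for all t, and with α_{1,1} = β_{1,1} = 0 (S₁ has no component at frequency 1). Let g_k : [0,∞) × ℝ^N × (0,ε₀] → ℝ be continuous with |g_k(t,0,ε)| ≤ M and such that for every R > 0 there is k_R with |g_k(t,u,ε) − g_k(t,v,ε)| ≤ k_R ‖u − v‖ whenever ‖u‖, ‖v‖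 ≤ R, uniformly in t and ε. If v_ε = (v₁,…,v_N) ∈ C²([0,∞); ℝ^N) solves ω² v_k'' + ω_k² v_k = S_k(t) + ε g_k(t, v_ε) with v_k(0) = 0, v_k'(0) = 0 for all k, then there exist γ > 0, C > 0 and ε₁ ∈ (0,ε₀] such that for all ε ∈ (0,ε₁] and all t ∈ [0, γ/ε], Σ_{k=1}^N (|v_k(t)| + |v_k'(t)| + |v_k''(t)|) ≤ C. -/
/-!
Subtracting from `v_k` the bounded response `T_k` of the oscillator to `S_k` alone (it exists
because no harmonic of `S_k` is resonant) leaves `w_k` with `ω² w_k'' + ω_k² w_k = ε g_k`. The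
energy `ω² w_k'² + ω_k² w_k²` then grows at rate at most `ε (energy + G²/ω²)` as long as
`|g_k| ≤ G`, which holds while `v` stays in a fixed ball. Gronwall keeps the energy small up to
time `γ/ε`, and a continuity argument shows that `v` never leaves the ball. The bound on `v''` is
read off the equation.
-/

open Real Set Filter Topology Finset

noncomputable def sinusoid (a b μ t : ℝ) : ℝ := a * cos (μ * t) + b * sin (μ * t)

section Sinusoid

variable (a b μ t : ℝ)

@[simp]
lemma sinusoid_zero : sinusoid a b μ 0 = a := by
  simp [sinusoid]

lemma mul_sinusoid (c : ℝ) : c * sinusoid a b μ t = sinusoid (c * a) (c * b) μ t := by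
  simp only [sinusoid]; ring

lemma hasDerivAt_sinusoid :
    HasDerivAt (sinusoid a b μ) (sinusoid (μ * b) (-(μ * a)) μ t) t := by
  have hμ : HasDerivAt (fun t => μ * t) μ t := by simpa using (hasDerivAt_id t).const_mul μ
  exact ((hμ.cos.const_mul a).fun_add (hμ.sin.const_mul b)).congr_deriv
    (by simp only [sinusoid]; ring)

lemma hasDerivAt_sinusoid_deriv :
    HasDerivAt (sinusoid (μ * b) (-(μ * a)) μ) (-μ ^ 2 * sinusoid a b μ t) t := by
  convert hasDerivAt_sinusoid (μ * b) (-(μ * a)) μ t using 1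
  simp only [sinusoid]; ring

lemma abs_sinusoid_le : |sinusoid a b μ t| ≤ |a| + |b| := by
  refine (abs_add_le _ _).trans ?_
  rw [abs_mul, abs_mul]
  gcongr
  · exact mul_le_of_le_one_right (abs_nonneg a) (abs_cos_le_one _)
  · exact mul_le_of_le_one_right (abs_nonneg b) (abs_sin_le_one _)

end Sinusoid

lemma abs_sum_sinusoid_add_sinusoid_le {ι : Type*} (s : Finset ι) (a b f : ι → ℝ)
    (p q μ t : ℝ) :
    |∑ i ∈ s, sinusoid (a i) (b i) (f i) t + sinusoid p q μ t|
      ≤ ∑ i ∈ s, (|a i| + |b i|) + (|p| + |q|) :=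
  (abs_add_le _ _).trans <| add_le_add
    ((abs_sum_le_sum_abs _ _).trans (sum_le_sum fun _ _ => abs_sinusoid_le ..))
    (abs_sinusoid_le ..)

/-- The response is the particular solution `∑ (aᵢ, bᵢ)/(ν² - fᵢ²ω²)` corrected by a free
oscillation of frequency `ν/ω`; resonant terms have zero amplitude, so the junk value
`x / 0 = 0` there is harmless. -/
theorem exists_bounded_forced_response {ι : Type*} (s : Finset ι) (a b f : ι → ℝ) {ω ν : ℝ}
    (hω : ω ≠ 0) (hν : ν ≠ 0)
    (hres : ∀ i ∈ s, ν ^ 2 - f i ^ 2 * ω ^ 2 = 0 → a i = 0 ∧ b i = 0) :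
    ∃ T T' T'' : ℝ → ℝ, (∀ t, HasDerivAt T (T' t) t) ∧ (∀ t, HasDerivAt T' (T'' t) t) ∧
      T 0 = 0 ∧ T' 0 = 0 ∧
      (∀ t, ω ^ 2 * T'' t + ν ^ 2 * T t = ∑ i ∈ s, sinusoid (a i) (b i) (f i) t) ∧
      ∃ B, ∀ t, |T t| ≤ B ∧ |T' t| ≤ B := by
  set D := fun i => ν ^ 2 - f i ^ 2 * ω ^ 2
  set c := fun i => a i / D i
  set d := fun i => b i / D i
  set μ := ν / ω
  set p := -∑ i ∈ s, c i
  set q := -(∑ i ∈ s, f i * d i) / μ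
  have hμ : μ ≠ 0 := div_ne_zero hν hω
  refine ⟨fun t => ∑ i ∈ s, sinusoid (c i) (d i) (f i) t + sinusoid p q μ t,
    fun t => ∑ i ∈ s, sinusoid (f i * d i) (-(f i * c i)) (f i) t
      + sinusoid (μ * q) (-(μ * p)) μ t,
    fun t => ∑ i ∈ s, -f i ^ 2 * sinusoid (c i) (d i) (f i) t + -μ ^ 2 * sinusoid p q μ t,
    fun t => (HasDerivAt.fun_sum fun _ _ => hasDerivAt_sinusoid ..).add
      (hasDerivAt_sinusoid ..),
    fun t => (HasDerivAt.fun_sum fun _ _ => hasDerivAt_sinusoid_deriv ..).add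
      (hasDerivAt_sinusoid_deriv ..),
    by simp [p], by simp only [sinusoid_zero, q]; field_simp; ring, fun t => ?_, ?_⟩
  · have hμω : ν ^ 2 - μ ^ 2 * ω ^ 2 = 0 := by simp only [μ]; field_simp; ring
    have hD : ∀ i ∈ s, D i * sinusoid (c i) (d i) (f i) t = sinusoid (a i) (b i) (f i) t :=
      fun i hi => by
        rw [mul_sinusoid, mul_div_cancel_of_imp' fun h => (hres i hi h).1,
          mul_div_cancel_of_imp' fun h => (hres i hi h).2]
    have hsum : ω ^ 2 * ∑ i ∈ s, -f i ^ 2 * sinusoid (c i) (d i) (f i) t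
        + ν ^ 2 * ∑ i ∈ s, sinusoid (c i) (d i) (f i) t
        = ∑ i ∈ s, D i * sinusoid (c i) (d i) (f i) t := by
      rw [mul_sum, mul_sum, ← sum_add_distrib]
      exact sum_congr rfl fun i _ => by ring
    rw [← sum_congr rfl hD]
    linear_combination hsum + sinusoid p q μ t * hμω
  · refine ⟨(∑ i ∈ s, (|c i| + |d i|) + (|p| + |q|))
      + (∑ i ∈ s, (|f i * d i| + |-(f i * c i)|) + (|μ * q| + |-(μ * p)|)), fun t => ⟨?_, ?_⟩⟩
    · exact le_add_of_le_of_nonneg (abs_sum_sinusoid_add_sinusoid_le ..) (by positivity)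
    · exact le_add_of_nonneg_of_le (by positivity) (abs_sum_sinusoid_add_sinusoid_le ..)

lemma ContDiffOn.hasDerivWithinAt_dIci {f : ℝ → ℝ} {n : WithTop ℕ∞}
    (hf : ContDiffOn ℝ n f (Ici 0)) (hn : n ≠ 0) {x : ℝ} (hx : 0 ≤ x) :
    HasDerivWithinAt f (dIci f x) (Ici 0) x :=
  (hf.differentiableOn hn x hx).hasDerivWithinAt

lemma ContDiffOn.dIci {f : ℝ → ℝ} (hf : ContDiffOn ℝ 2 f (Ici 0)) :
    ContDiffOn ℝ 1 (dIci f) (Ici 0) :=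
  hf.derivWithin (uniqueDiffOn_Ici 0) (by norm_num)

lemma ContinuousOn.forall_lt_of_forall_Ico_lt {φ : ℝ → ℝ} {a b R : ℝ}
    (hφ : ContinuousOn φ (Icc a b))
    (step : ∀ t ∈ Icc a b, (∀ s ∈ Ico a t, φ s < R) → φ t < R) :
    ∀ t ∈ Icc a b, φ t < R := by
  by_contra! hbad
  set B := {t ∈ Icc a b | R ≤ φ t}
  have hB : IsClosed B := hφ.preimage_isClosed_of_isClosed isClosed_Icc isClosed_Ici
  have hBne : B.Nonempty := hbad
  have hBbdd : BddBelow B := ⟨a, fun t ht => ht.1.1⟩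
  have hmem : sInf B ∈ B := hB.csInf_mem hBne hBbdd
  refine (step _ hmem.1 fun s hs => ?_).not_ge hmem.2
  by_contra! hs'
  exact hs.2.not_ge (csInf_le hBbdd ⟨⟨hs.1, hs.2.le.trans hmem.1.2⟩, hs'⟩)

/-- The energy grows at rate at most `ε (energy + G²/ω²)`, since `2 w' h ≤ ω² w'² + h²/ω²`;
Gronwall does the rest. -/
theorem energy_le_of_forced_oscillator {w w' w'' h : ℝ → ℝ} {ω ν ε G τ : ℝ}
    (hω : 0 < ω) (hε : 0 < ε) (hτ : 0 ≤ τ)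
    (hw : ∀ x ≥ 0, HasDerivWithinAt w (w' x) (Ici 0) x)
    (hw' : ∀ x ≥ 0, HasDerivWithinAt w' (w'' x) (Ici 0) x)
    (hode : ∀ x ≥ 0, ω ^ 2 * w'' x + ν ^ 2 * w x = ε * h x)
    (hh : ∀ x ∈ Ico 0 τ, |h x| ≤ G) (h0 : w 0 = 0) (h0' : w' 0 = 0) :
    ω ^ 2 * w' τ ^ 2 + ν ^ 2 * w τ ^ 2 ≤ G ^ 2 / ω ^ 2 * (exp (ε * τ) - 1) := by
  set E := fun x => ω ^ 2 * w' x ^ 2 + ν ^ 2 * w x ^ 2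
  have hE : ∀ x ≥ 0, HasDerivWithinAt E (2 * ε * h x * w' x) (Ici 0) x := fun x hx =>
    (((hw' x hx).pow 2).const_mul _).add (((hw x hx).pow 2).const_mul _) |>.congr_deriv <| by
      push_cast; linear_combination 2 * w' x * hode x hx
  have hE_nonneg : ∀ x, 0 ≤ E x := fun x => by positivity
  have hbound : ∀ x ∈ Ico 0 τ, ‖2 * ε * h x * w' x‖ ≤ ε * ‖E x‖ + ε * (G ^ 2 / ω ^ 2) := by
    intro x hx
    have hG : (|h x| / ω) ^ 2 ≤ G ^ 2 / ω ^ 2 := by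
      rw [div_pow]; gcongr; exact hh x hx
    rw [Real.norm_eq_abs, Real.norm_eq_abs, abs_of_nonneg (hE_nonneg x), abs_mul, abs_mul,
      abs_mul, abs_two, abs_of_pos hε]
    calc 2 * ε * |h x| * |w' x| = ε * (2 * (ω * |w' x|) * (|h x| / ω)) := by
          field_simp
      _ ≤ ε * ((ω * |w' x|) ^ 2 + (|h x| / ω) ^ 2) := by
          gcongr; exact two_mul_le_add_sq _ _
      _ ≤ ε * E x + ε * (G ^ 2 / ω ^ 2) := by
          rw [← mul_add]; gcongr
          simp only [E, mul_pow, sq_abs]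
          linarith [mul_nonneg (sq_nonneg ν) (sq_nonneg (w x))]
  have := norm_le_gronwallBound_of_norm_deriv_right_le (δ := 0)
    (fun x hx => (hE x hx.1).continuousWithinAt.mono Icc_subset_Ici_self)
    (fun x hx => (hE x hx.1).mono (Ici_subset_Ici.mpr hx.1)) (by simp [E, h0, h0']) hbound
    τ ⟨hτ, le_rfl⟩
  rw [gronwallBound_of_K_ne_0 hε.ne', Real.norm_eq_abs, abs_of_nonneg (hE_nonneg τ)] at this
  simpa only [sub_zero, zero_mul, zero_add, mul_div_cancel_left₀ _ hε.ne'] using this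

lemma abs_lt_of_energy_lt {ω ν x y : ℝ} (hω : 0 < ω) (hν : 0 < ν)
    (h : ω ^ 2 * y ^ 2 + ν ^ 2 * x ^ 2 < ν ^ 2) : |x| < 1 ∧ |y| < ν / ω := by
  constructor
  · rw [← sq_lt_one_iff_abs_lt_one]
    nlinarith [mul_nonneg (sq_nonneg ω) (sq_nonneg y)]
  · rw [lt_div_iff₀ hω, mul_comm, ← abs_of_pos hω, ← abs_mul]
    exact abs_lt_of_sq_lt_sq (by nlinarith [mul_nonneg (sq_nonneg ν) (sq_nonneg x)]) hν.le

theorem forced_oscillators_stay_in_box {ι : Type*} [Fintype ι] {w w' w'' f : ι → ℝ → ℝ}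
    {ν : ι → ℝ} {ω ε G γ : ℝ} (hω : 0 < ω) (hε : 0 < ε) (hν : ∀ k, 0 < ν k)
    (hw : ∀ k, ∀ x ≥ 0, HasDerivWithinAt (w k) (w' k x) (Ici 0) x)
    (hw' : ∀ k, ∀ x ≥ 0, HasDerivWithinAt (w' k) (w'' k x) (Ici 0) x)
    (hode : ∀ k, ∀ x ≥ 0, ω ^ 2 * w'' k x + ν k ^ 2 * w k x = ε * f k x)
    (hf : ∀ x ≥ 0, (∀ k, |w k x| < 1) → ∀ k, |f k x| ≤ G)
    (h0 : ∀ k, w k 0 = 0) (h0' : ∀ k, w' k 0 = 0)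
    (hγ : ∀ k, G ^ 2 / ω ^ 2 * (exp γ - 1) < ν k ^ 2) :
    ∀ t ∈ Icc 0 (γ / ε), ∀ k, |w k t| < 1 ∧ |w' k t| < ν k / ω := by
  have energy : ∀ t ∈ Icc 0 (γ / ε), (∀ s ∈ Ico 0 t, ∀ k, |w k s| < 1) →
      ∀ k, |w k t| < 1 ∧ |w' k t| < ν k / ω := by
    intro t ht hbox k
    refine abs_lt_of_energy_lt hω (hν k) ((energy_le_of_forced_oscillator hω hε ht.1 (hw k)
      (hw' k) (hode k) (fun s hs => hf s hs.1 (hbox s hs) k) (h0 k) (h0' k)).trans_lt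
      (lt_of_le_of_lt ?_ (hγ k)))
    have hεt : ε * t ≤ γ := by rw [← le_div_iff₀' hε]; exact ht.2
    gcongr
  have box : ∀ t ∈ Icc 0 (γ / ε), ‖fun k => w k t‖ < 1 := by
    refine ContinuousOn.forall_lt_of_forall_Ico_lt ?_ fun t ht hbox => ?_
    · exact continuousOn_pi.mpr (fun k x hx => (hw k x hx.1).continuousWithinAt.mono
        Icc_subset_Ici_self) |>.norm
    · refine (pi_norm_lt_iff one_pos).mpr fun k => ?_
      exact (energy t ht (fun s hs => (pi_norm_lt_iff one_pos).mp (hbox s hs)) k).1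
  exact fun t ht => energy t ht fun s hs =>
    (pi_norm_lt_iff one_pos).mp (box s ⟨hs.1, hs.2.le.trans ht.2⟩)

lemma exists_pos_forall_mul_exp_sub_one_lt {ι : Type*} [Finite ι] (K : ℝ) {c : ι → ℝ}
    (hc : ∀ k, 0 < c k) : ∃ γ > 0, ∀ k, K * (exp γ - 1) < c k := by
  have hlim : Tendsto (fun γ => K * (exp γ - 1)) (𝓝[>] 0) (𝓝 0) := by
    have hcont : Continuous fun γ => K * (exp γ - 1) := by fun_prop
    have := hcont.tendsto 0
    simp only [exp_zero, sub_self, mul_zero] at this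
    exact this.mono_left nhdsWithin_le_nhds
  have hev : ∀ᶠ γ in 𝓝[>] 0, ∀ k, K * (exp γ - 1) < c k :=
    eventually_all.mpr fun k => hlim.eventually (gt_mem_nhds (hc k))
  obtain ⟨γ, hγ, hγpos⟩ := (hev.and self_mem_nhdsWithin).exists
  exact ⟨γ, hγpos, hγ⟩

lemma abs_le_of_oscillator_eq {ω ν a y s F M G Y : ℝ} (hω : 0 < ω)
    (h : ω ^ 2 * a + ν ^ 2 * y = s + F) (hs : |s| ≤ M) (hF : |F| ≤ G) (hy : |y| ≤ Y) :
    |a| ≤ (M + G + ν ^ 2 * Y) / ω ^ 2 := by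
  have ha : a = (s + F - ν ^ 2 * y) / ω ^ 2 := by field_simp; linarith
  rw [ha, abs_div, abs_of_pos (pow_pos hω 2)]
  gcongr
  calc |s + F - ν ^ 2 * y| ≤ |s + F| + |ν ^ 2 * y| := abs_sub _ _
    _ ≤ |s| + |F| + ν ^ 2 * |y| := by
        rw [abs_mul, abs_sq]; gcongr; exact abs_add_le _ _
    _ ≤ M + G + ν ^ 2 * Y := by gcongr

theorem exists_bound_of_bounded_forced_response {ι : Type*} [Fintype ι] {ω εmax M B : ℝ}
    {ν : ι → ℝ} {S T T' T'' : ι → ℝ → ℝ} {g : ι → ℝ → (ι → ℝ) → ℝ → ℝ}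
    {v : ℝ → ι → ℝ → ℝ} (hω : 0 < ω) (hν : ∀ k, 0 < ν k) (hB : 0 ≤ B)
    (hT : ∀ k t, HasDerivAt (T k) (T' k t) t) (hT' : ∀ k t, HasDerivAt (T' k) (T'' k t) t)
    (hT0 : ∀ k, T k 0 = 0) (hT0' : ∀ k, T' k 0 = 0)
    (hTode : ∀ k t, ω ^ 2 * T'' k t + ν k ^ 2 * T k t = S k t)
    (hTB : ∀ k t, |T k t| ≤ B ∧ |T' k t| ≤ B) (hS : ∀ k t, |S k t| ≤ M)
    (hg : ∀ R > 0, ∃ G, ∀ k, ∀ t ≥ 0, ∀ ε ∈ Ioc 0 εmax, ∀ u : ι → ℝ, ‖u‖ ≤ R →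
      |g k t u ε| ≤ G)
    (hvreg : ∀ ε ∈ Ioc 0 εmax, ∀ k, ContDiffOn ℝ 2 (v ε k) (Ici 0))
    (hode : ∀ ε ∈ Ioc 0 εmax, ∀ k, ∀ t ≥ 0,
      ω ^ 2 * dIci (dIci (v ε k)) t + ν k ^ 2 * v ε k t = S k t + ε * g k t (fun j => v ε j t) ε)
    (hv0 : ∀ ε ∈ Ioc 0 εmax, ∀ k, v ε k 0 = 0)
    (hv0' : ∀ ε ∈ Ioc 0 εmax, ∀ k, dIci (v ε k) 0 = 0) :
    ∃ γ > 0, ∃ C, ∀ ε ∈ Ioc 0 εmax, ∀ t ∈ Icc 0 (γ / ε),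
      ∑ k, (|v ε k t| + |dIci (v ε k) t| + |dIci (dIci (v ε k)) t|) ≤ C := by
  obtain ⟨G, hG⟩ := hg (B + 1) (by linarith)
  obtain ⟨γ, hγ, hγν⟩ :=
    exists_pos_forall_mul_exp_sub_one_lt (G ^ 2 / ω ^ 2) fun k => pow_pos (hν k) 2
  refine ⟨γ, hγ, ∑ k, ((B + 1) + (B + ν k / ω) + (M + εmax * G + ν k ^ 2 * (B + 1)) / ω ^ 2),
    fun ε hε t ht => ?_⟩
  have hv : ∀ k, ∀ x ≥ 0, HasDerivWithinAt (v ε k) (dIci (v ε k) x) (Ici 0) x :=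
    fun k x hx => (hvreg ε hε k).hasDerivWithinAt_dIci two_ne_zero hx
  have hv' : ∀ k, ∀ x ≥ 0, HasDerivWithinAt (dIci (v ε k)) (dIci (dIci (v ε k)) x) (Ici 0) x :=
    fun k x hx => (hvreg ε hε k).dIci.hasDerivWithinAt_dIci one_ne_zero hx
  have hball : ∀ x, (∀ k, |v ε k x - T k x| < 1) → ‖fun j => v ε j x‖ ≤ B + 1 :=
    fun x hx => (pi_norm_le_iff_of_nonneg (by linarith)).mpr fun j => by
      linarith [Real.norm_eq_abs (v ε j x), abs_sub_abs_le_abs_sub (v ε j x) (T j x), hx j,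
        (hTB j x).1]
  have hbox := forced_oscillators_stay_in_box (w := fun k s => v ε k s - T k s)
    (w' := fun k s => dIci (v ε k) s - T' k s) (w'' := fun k s => dIci (dIci (v ε k)) s - T'' k s)
    (f := fun k s => g k s (fun j => v ε j s) ε) hω hε.1 hν
    (fun k x hx => (hv k x hx).sub (hT k x).hasDerivWithinAt)
    (fun k x hx => (hv' k x hx).sub (hT' k x).hasDerivWithinAt)
    (fun k x hx => by linear_combination hode ε hε k x hx - hTode k x)
    (fun x hx hw k => hG k x hx ε hε _ (hball x hw))
    (fun k => by simp [hv0 ε hε k, hT0 k]) (fun k => by simp [hv0' ε hε k, hT0' k]) hγν t ht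
  refine sum_le_sum fun k _ => ?_
  obtain ⟨hw, hw'⟩ := hbox k
  have hvt : |v ε k t| ≤ B + 1 := by
    linarith [abs_sub_abs_le_abs_sub (v ε k t) (T k t), (hTB k t).1]
  have hv't : |dIci (v ε k) t| ≤ B + ν k / ω := by
    linarith [abs_sub_abs_le_abs_sub (dIci (v ε k) t) (T' k t), (hTB k t).2]
  have hεg : |ε * g k t (fun j => v ε j t) ε| ≤ εmax * G := by
    rw [abs_mul, abs_of_pos hε.1]
    exact mul_le_mul hε.2 (hG k t ht.1 ε hε _ (hball t fun j => (hbox j).1)) (abs_nonneg _)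
      (hε.1.trans_le hε.2).le
  linarith [abs_le_of_oscillator_eq hω (hode ε hε k t ht.1) (hS k t) hεg hvt]

lemma eq_natCast_mul_of_sq_sub_eq_zero {ν ω : ℝ} {m : ℕ} (hν : 0 < ν) (hω : 0 < ω)
    (h : ν ^ 2 - (m : ℝ) ^ 2 * ω ^ 2 = 0) : ν = m * ω := by
  rw [sub_eq_zero, ← mul_pow] at h
  exact (pow_left_inj₀ hν.le (by positivity) two_ne_zero).mp h

lemma coeff_eq_zero_of_resonant {N : ℕ} (hN : 0 < N) {ω : ℝ} (hω : 0 < ω) {ωs : Fin N → ℝ}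
    (hωs : ∀ k, 0 < ωs k) (hω1 : ωs ⟨0, hN⟩ = ω)
    (hres : ∀ k : Fin N, 0 < (k : ℕ) → ∀ z : ℤ, ωs k / ω ≠ (z : ℝ)) {α β : Fin N → ℕ → ℝ}
    (hS1α : α ⟨0, hN⟩ 1 = 0) (hS1β : β ⟨0, hN⟩ 1 = 0) (k : Fin N) (m : ℕ)
    (hkm : ωs k ^ 2 - (m : ℝ) ^ 2 * ω ^ 2 = 0) : α k m = 0 ∧ β k m = 0 := by
  have hνm := eq_natCast_mul_of_sq_sub_eq_zero (hωs k) hω hkm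
  rcases Nat.eq_zero_or_pos k with hk | hk
  · obtain rfl : k = ⟨0, hN⟩ := Fin.ext hk
    obtain rfl : m = 1 := by
      rw [hω1, eq_comm, mul_eq_right₀ hω.ne'] at hνm; exact_mod_cast hνm
    exact ⟨hS1α, hS1β⟩
  · exact (hres k hk m (by rw [hνm, mul_div_cancel_right₀ _ hω.ne', Int.cast_natCast])).elim

theorem stmt_3_general (N : ℕ) (hN : 0 < N) (ω : ℝ) (hω : 0 < ω)
    (ωs : Fin N → ℝ) (hωs : ∀ k, 0 < ωs k) (hω1 : ωs ⟨0, hN⟩ = ω)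
    (hres : ∀ k : Fin N, 0 < (k : ℕ) → ∀ z : ℤ, ωs k / ω ≠ (z : ℝ))
    (M εmax : ℝ) (hεmax : 0 < εmax)
    (M₀ : ℕ) (α β : Fin N → ℕ → ℝ)
    (S : Fin N → ℝ → ℝ)
    (hSdef : ∀ k t, S k t = ∑ m ∈ Finset.range (M₀ + 1),
        (α k m * Real.cos (m * t) + β k m * Real.sin (m * t)))
    (hS1α : α ⟨0, hN⟩ 1 = 0) (hS1β : β ⟨0, hN⟩ 1 = 0)
    (hSbd : ∀ k, ∀ t : ℝ, |S k t| ≤ M)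
    (g : Fin N → ℝ → (Fin N → ℝ) → ℝ → ℝ)
    (hg0 : ∀ k, ∀ t ≥ (0:ℝ), ∀ ε ∈ Set.Ioc (0:ℝ) εmax, |g k t 0 ε| ≤ M)
    (hglip : ∀ R > (0:ℝ), ∃ kR > (0:ℝ), ∀ k, ∀ t ≥ (0:ℝ), ∀ ε ∈ Set.Ioc (0:ℝ) εmax,
        ∀ u v : Fin N → ℝ, ‖u‖ ≤ R → ‖v‖ ≤ R →
          |g k t u ε - g k t v ε| ≤ kR * ‖u - v‖)
    (v : ℝ → Fin N → ℝ → ℝ)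
    (hvreg : ∀ ε ∈ Set.Ioc (0:ℝ) εmax, ∀ k, ContDiffOn ℝ 2 (v ε k) (Set.Ici 0))
    (hode : ∀ ε ∈ Set.Ioc (0:ℝ) εmax, ∀ k, ∀ t ≥ (0:ℝ),
        ω^2 * dIci (dIci (v ε k)) t + (ωs k)^2 * v ε k t
          = S k t + ε * g k t (fun j => v ε j t) ε)
    (hv0 : ∀ ε ∈ Set.Ioc (0:ℝ) εmax, ∀ k, v ε k 0 = 0)
    (hv0' : ∀ ε ∈ Set.Ioc (0:ℝ) εmax, ∀ k, dIci (v ε k) 0 = 0) :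
    ∃ γ > (0:ℝ), ∃ C > (0:ℝ), ∃ ε₁ ∈ Set.Ioc (0:ℝ) εmax, ∀ ε ∈ Set.Ioc (0:ℝ) ε₁,
      ∀ t ∈ Set.Icc (0:ℝ) (γ / ε),
        ∑ k, (|v ε k t| + |dIci (v ε k) t| + |dIci (dIci (v ε k)) t|) ≤ C := by
  choose T T' T'' hT hT' hT0 hT0' hTode B hB using fun k =>
    exists_bounded_forced_response (range (M₀ + 1)) (α k) (β k) (fun m => (m : ℝ)) hω.ne'
      (hωs k).ne' fun m _ =>
        coeff_eq_zero_of_resonant hN hω hωs hω1 hres hS1α hS1β k m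
  have hB0 : ∀ k, 0 ≤ B k := fun k => (abs_nonneg _).trans (hB k 0).1
  have hBsum : ∀ k, B k ≤ ∑ j, B j := fun k => single_le_sum (fun j _ => hB0 j) (mem_univ k)
  have hg : ∀ R > 0, ∃ G, ∀ k, ∀ t ≥ 0, ∀ ε ∈ Ioc 0 εmax, ∀ u : Fin N → ℝ, ‖u‖ ≤ R →
      |g k t u ε| ≤ G := fun R hR => by
    obtain ⟨kR, hkR, hlip⟩ := hglip R hR
    refine ⟨M + kR * R, fun k t ht ε hε u hu => ?_⟩
    have := hlip k t ht ε hε u 0 hu (by simpa using hR.le)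
    rw [sub_zero] at this
    linarith [abs_sub_abs_le_abs_sub (g k t u ε) (g k t 0 ε), hg0 k t ht ε hε,
      mul_le_mul_of_nonneg_left hu hkR.le]
  obtain ⟨γ, hγ, C, hC⟩ := exists_bound_of_bounded_forced_response hω hωs
    (sum_nonneg fun k _ => hB0 k) hT hT' hT0 hT0' (fun k t => (hSdef k t).symm ▸ hTode k t)
    (fun k t => ⟨(hB k t).1.trans (hBsum k), (hB k t).2.trans (hBsum k)⟩) hSbd hg hvreg hode
    hv0 hv0'
  exact ⟨γ, hγ, max C 1, by positivity, εmax, ⟨hεmax, le_rfl⟩,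
    fun ε hε t ht => (hC ε hε t ht).trans (le_max_left _ _)⟩

/-- System version of the technical remainder lemma: `ω² v_k'' + ω_k² v_k = S_k + ε g_k(t,v)`
with zero data, integer-frequency trigonometric forcings, no frequency-1 component in the
first (resonant) equation, `ω_k/ω ∉ ℤ` for `k ≥ 2`, and locally Lipschitz `g`; the solution
is bounded in `C²` on `[0, γ/ε]`. -/
theorem stmt_3 (N : ℕ) (hN : 0 < N) (ω : ℝ) (hω : 0 < ω)
    (ωs : Fin N → ℝ) (hωs : ∀ k, 0 < ωs k) (hω1 : ωs ⟨0, hN⟩ = ω)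
    (hres : ∀ k : Fin N, 0 < (k : ℕ) → ∀ z : ℤ, ωs k / ω ≠ (z : ℝ))
    (M εmax : ℝ) (hM : 0 < M) (hεmax : 0 < εmax)
    (M₀ : ℕ) (α β : Fin N → ℕ → ℝ)
    (S : Fin N → ℝ → ℝ)
    (hSdef : ∀ k t, S k t = ∑ m ∈ Finset.range (M₀ + 1),
        (α k m * Real.cos (m * t) + β k m * Real.sin (m * t)))
    (hS1α : α ⟨0, hN⟩ 1 = 0) (hS1β : β ⟨0, hN⟩ 1 = 0)
    (hSbd : ∀ k, ∀ t : ℝ, |S k t| ≤ M)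
    (g : Fin N → ℝ → (Fin N → ℝ) → ℝ → ℝ)
    (hgcont : ∀ k, ContinuousOn (fun q : ℝ × (Fin N → ℝ) × ℝ => g k q.1 q.2.1 q.2.2)
        ((Set.Ici (0:ℝ)) ×ˢ ((Set.univ : Set (Fin N → ℝ)) ×ˢ (Set.Ioc (0:ℝ) εmax))))
    (hg0 : ∀ k, ∀ t ≥ (0:ℝ), ∀ ε ∈ Set.Ioc (0:ℝ) εmax, |g k t 0 ε| ≤ M)
    (hglip : ∀ R > (0:ℝ), ∃ kR > (0:ℝ), ∀ k, ∀ t ≥ (0:ℝ), ∀ ε ∈ Set.Ioc (0:ℝ) εmax,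
        ∀ u v : Fin N → ℝ, ‖u‖ ≤ R → ‖v‖ ≤ R →
          |g k t u ε - g k t v ε| ≤ kR * ‖u - v‖)
    (v : ℝ → Fin N → ℝ → ℝ)
    (hvreg : ∀ ε ∈ Set.Ioc (0:ℝ) εmax, ∀ k, ContDiffOn ℝ 2 (v ε k) (Set.Ici 0))
    (hode : ∀ ε ∈ Set.Ioc (0:ℝ) εmax, ∀ k, ∀ t ≥ (0:ℝ),
        ω^2 * dIci (dIci (v ε k)) t + (ωs k)^2 * v ε k t
          = S k t + ε * g k t (fun j => v ε j t) ε)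
    (hv0 : ∀ ε ∈ Set.Ioc (0:ℝ) εmax, ∀ k, v ε k 0 = 0)
    (hv0' : ∀ ε ∈ Set.Ioc (0:ℝ) εmax, ∀ k, dIci (v ε k) 0 = 0) :
    ∃ γ > (0:ℝ), ∃ C > (0:ℝ), ∃ ε₁ ∈ Set.Ioc (0:ℝ) εmax, ∀ ε ∈ Set.Ioc (0:ℝ) ε₁,
      ∀ t ∈ Set.Icc (0:ℝ) (γ / ε),
        ∑ k, (|v ε k t| + |dIci (v ε k) t| + |dIci (dIci (v ε k)) t|) ≤ C :=
  stmt_3_general N hN ω hω ωs hωs hω1 hres M εmax hεmax M₀ α β S hSdef hS1α hS1β hSbd g hg0 hglip v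
    hvreg hode hv0 hv0'
end

section
/- Let λ > 0, ω > 0 and d, ā, σ ∈ ℝ. If either 9d²ā⁴ < 16ω²λ², or 9d²ā⁴ ≥ 16ω²λ² and σ < 3dā²/(4ω) − (1/2)√(9d²ā⁴/(16ω²) − λ²), then λ²/4 + σ² − 3dσā²/(2ω) + 27d²ā⁴/(64ω²) > 0. -/
/-!
With `p = 3dā²/(4ω)` the quantity is the monic quadratic `σ² - 2pσ + (3p² + λ²)/4` in `σ`,
whose discriminant is `(p² - λ²)/4`. It is positive everywhere when `p² < λ²`, and otherwise
to the left of its smaller root `p - √(p² - λ²)/2`.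
-/

theorem quadratic_pos_of_sq_lt {p c : ℝ} (h : p ^ 2 < c) (x : ℝ) :
    0 < x ^ 2 - 2 * p * x + c := by
  nlinarith [sq_nonneg (x - p)]

theorem quadratic_pos_of_lt_sub_sqrt {p c x : ℝ} (h : x < p - √(p ^ 2 - c)) :
    0 < x ^ 2 - 2 * p * x + c := by
  have hroot : √(p ^ 2 - c) < p - x := by linarith
  have hdisc : p ^ 2 - c < (p - x) ^ 2 :=
    (Real.sqrt_lt' (by linarith [Real.sqrt_nonneg (p ^ 2 - c)])).1 hroot
  nlinarith

theorem stmt_6_general (lam ω d abar σ : ℝ) (hω : 0 < ω)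
    (h : 9*d^2*abar^4 < 16*ω^2*lam^2 ∨
      (16*ω^2*lam^2 ≤ 9*d^2*abar^4 ∧
        σ < 3*d*abar^2/(4*ω) - (1/2) * Real.sqrt (9*d^2*abar^4/(16*ω^2) - lam^2))) :
    0 < lam^2/4 + σ^2 - 3*d*σ*abar^2/(2*ω) + 27*d^2*abar^4/(64*ω^2) := by
  set p := 3*d*abar^2/(4*ω) with hp
  have hp_sq : p ^ 2 = 9*d^2*abar^4/(16*ω^2) := by
    rw [hp]; field_simp; ring
  have hquad : lam^2/4 + σ^2 - 3*d*σ*abar^2/(2*ω) + 27*d^2*abar^4/(64*ω^2)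
      = σ ^ 2 - 2 * p * σ + (3 * p ^ 2 + lam ^ 2) / 4 := by
    rw [hp]; field_simp; ring
  rw [hquad]
  rcases h with h | ⟨-, h⟩
  · have hp_lt : p ^ 2 < lam ^ 2 := by
      rw [hp_sq, div_lt_iff₀ (by positivity)]; linarith
    exact quadratic_pos_of_sq_lt (by linarith) σ
  · have hroot : √(p ^ 2 - (3 * p ^ 2 + lam ^ 2) / 4)
        = (1/2) * √(9*d^2*abar^4/(16*ω^2) - lam^2) := by
      rw [← hp_sq, show p ^ 2 - (3 * p ^ 2 + lam ^ 2) / 4 = (p ^ 2 - lam ^ 2) / 2 ^ 2 by ring,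
        Real.sqrt_div' _ (by positivity), Real.sqrt_sq (by norm_num)]
      ring
    exact quadratic_pos_of_lt_sub_sqrt (hroot ▸ h)

/-- Positivity of the leading term of the Jacobian determinant of the modulation system
at a stationary point, under the stability condition on the detuning `σ`. -/
theorem stmt_6 (lam ω d abar σ : ℝ) (hlam : 0 < lam) (hω : 0 < ω)
    (h : 9*d^2*abar^4 < 16*ω^2*lam^2 ∨
      (16*ω^2*lam^2 ≤ 9*d^2*abar^4 ∧
        σ < 3*d*abar^2/(4*ω) - (1/2) * Real.sqrt (9*d^2*abar^4/(16*ω^2) - lam^2))) :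
    0 < lam^2/4 + σ^2 - 3*d*σ*abar^2/(2*ω) + 27*d^2*abar^4/(64*ω^2) :=
  stmt_6_general lam ω d abar σ hω h
end
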